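/- arXiv:1703.04413 — 3 statements merged into one kernel-verified Lean document; each statement's English description precedes it below -/
import Mathlib

section
/- Let A be a complex n×n matrix. The set 𝔹 = {x ∈ ℂ^n : the orbit {e^{tA}x : t ∈ ℝ} is bounded} equals the sum, over all purely imaginary eigenvalues λ of A (i.e. Re(λ) = 0), of the eigenspaces ker(A − λI). In particular 𝔹 is a linear subspace on which A acts diagonalizably with all eigenvalues of zero real part. -/
/-!
The bounded-orbit set is an `A`-invariant subspace, hence the sum of its intersections with the
generalized eigenspaces of `A`. If `(A - μ)² x = 0`, then `e^{tA} x = e^{tμ} (x + t (A - μ) x)`.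
For an eigenvector this has norm `e^{t Re μ} ‖x‖`, so a bounded orbit forces `Re μ = 0`; and then
a bounded orbit forces `(A - μ) x = 0`, since otherwise the line `x + t (A - μ) x` is unbounded.
Descending a Jordan chain, every generalized eigenvector with bounded orbit is an eigenvector
with purely imaginary eigenvalue, while those eigenvectors have orbits of constant norm.
-/

/-- The linear flow of a complex matrix `A` on `ℂⁿ`: `t ↦ e^{tA}` acting on vectors. -/
noncomputable def linFlowC {n : ℕ} (A : Matrix (Fin n) (Fin n) ℂ) (t : ℝ) (x : Fin n → ℂ) :
    Fin n → ℂ :=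
  (NormedSpace.exp (t • A)).mulVec x

open NormedSpace

namespace Matrix

variable {m : Type*} [Fintype m] [DecidableEq m]

theorem sub_smul_one_mulVec_eq_zero_iff (A : Matrix m m ℂ) (μ : ℂ) (v : m → ℂ) :
    (A - μ • 1) *ᵥ v = 0 ↔ A *ᵥ v = μ • v := by
  rw [sub_mulVec, smul_mulVec, one_mulVec, sub_eq_zero]

theorem exp_mulVec_of_mulVec_mulVec_eq_zero (N : Matrix m m ℂ) {x : m → ℂ}
    (hx : N *ᵥ N *ᵥ x = 0) : exp N *ᵥ x = x + N *ᵥ x := by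
  have hs : HasSum (fun k : ℕ => ((k.factorial⁻¹ : ℂ) • N ^ k) *ᵥ x) (exp N *ᵥ x) := by
    open scoped Matrix.Norms.Operator in
    exact (exp_series_hasSum_exp' (𝕂 := ℂ) N).map (mulVec.addMonoidHomLeft x)
      (continuous_id.matrix_mulVec continuous_const)
  have hvanish : ∀ k ∉ Finset.range 2, ((k.factorial⁻¹ : ℂ) • N ^ k) *ᵥ x = 0 := by
    intro k hk
    obtain ⟨j, rfl⟩ : ∃ j, k = j + 2 := ⟨k - 2, by simp at hk; omega⟩
    simp [smul_mulVec, pow_add, sq, ← mulVec_mulVec, hx]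
  rw [hs.unique (hasSum_sum_of_ne_finset_zero hvanish)]
  simp [Finset.sum_range_succ]

theorem exp_smul_mulVec_of_sub_smul_one_sq (A : Matrix m m ℂ) (μ : ℂ) {x : m → ℂ}
    (hx : (A - μ • 1) *ᵥ (A - μ • 1) *ᵥ x = 0) (t : ℝ) :
    exp (t • A) *ᵥ x = Complex.exp (t * μ) • (x + (t : ℂ) • (A - μ • 1) *ᵥ x) := by
  have hsplit : t • A = (t * μ : ℂ) • 1 + (t : ℂ) • (A - μ • 1) := by
    rw [smul_sub, smul_smul, ← Complex.coe_smul]; abel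
  have hscalar : exp ((t * μ : ℂ) • (1 : Matrix m m ℂ)) = Complex.exp (t * μ) • 1 := by
    open scoped Matrix.Norms.Operator in
    have h := (algebraMap_exp_comm (𝔸 := Matrix m m ℂ) (t * μ : ℂ)).symm
    rw [Algebra.algebraMap_eq_smul_one, Algebra.algebraMap_eq_smul_one,
      ← Complex.exp_eq_exp_ℂ] at h
    exact h
  rw [hsplit, exp_add_of_commute _ _ ((Commute.one_left _).smul_left _), hscalar, smul_mul,
    one_mul, smul_mulVec, exp_mulVec_of_mulVec_mulVec_eq_zero, smul_mulVec]
  simp only [smul_mulVec, mulVec_smul, hx, smul_zero]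

end Matrix

theorem eq_zero_of_forall_norm_add_smul_le {E : Type*} [NormedAddCommGroup E] [NormedSpace ℝ E]
    {x y : E} {C : ℝ} (h : ∀ t : ℝ, ‖x + t • y‖ ≤ C) : y = 0 := by
  by_contra hy
  have hy' : 0 < ‖y‖ := norm_pos_iff.mpr hy
  have hC : 0 ≤ C := (norm_nonneg _).trans (h 0)
  set t := (C + ‖x‖ + 1) / ‖y‖
  have ht : ‖t • y‖ = C + ‖x‖ + 1 := by
    rw [norm_smul, Real.norm_of_nonneg (by positivity)]
    exact div_mul_cancel₀ _ hy'.ne'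
  have := norm_le_add_norm_add (t • y) x
  rw [add_comm (t • y)] at this
  linarith [h t]

theorem Real.eq_zero_of_forall_exp_mul_mul_le {r a C : ℝ} (ha : 0 < a)
    (h : ∀ t : ℝ, Real.exp (t * r) * a ≤ C) : r = 0 := by
  by_contra hr
  have hexp := h (C / a / r)
  rw [div_mul_cancel₀ _ hr] at hexp
  have := Real.add_one_le_exp (C / a)
  have : (C / a + 1) * a = C + a := by field_simp
  nlinarith

open Matrix Module.End

section BoundedOrbits

variable {n : ℕ} (A : Matrix (Fin n) (Fin n) ℂ)

theorem norm_linFlowC_of_sub_smul_one_sq {μ : ℂ} {x : Fin n → ℂ}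
    (hx : (A - μ • 1) *ᵥ (A - μ • 1) *ᵥ x = 0) (t : ℝ) :
    ‖linFlowC A t x‖ = Real.exp (t * μ.re) * ‖x + (t : ℂ) • (A - μ • 1) *ᵥ x‖ := by
  rw [linFlowC, exp_smul_mulVec_of_sub_smul_one_sq A μ hx t, norm_smul, Complex.norm_exp]
  simp

theorem norm_linFlowC_of_mulVec_eq_smul {μ : ℂ} {v : Fin n → ℂ} (hv : A *ᵥ v = μ • v) (t : ℝ) :
    ‖linFlowC A t v‖ = Real.exp (t * μ.re) * ‖v‖ := by
  have hN := (sub_smul_one_mulVec_eq_zero_iff A μ v).mpr hv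
  rw [norm_linFlowC_of_sub_smul_one_sq A (by rw [hN, mulVec_zero]) t, hN, smul_zero, add_zero]

noncomputable def boundedOrbits : Submodule ℂ (Fin n → ℂ) where
  carrier := {x | ∃ C : ℝ, ∀ t : ℝ, ‖linFlowC A t x‖ ≤ C}
  add_mem' := by
    rintro x y ⟨C, hC⟩ ⟨D, hD⟩
    refine ⟨C + D, fun t => ?_⟩
    rw [linFlowC, mulVec_add]
    exact (norm_add_le _ _).trans (add_le_add (hC t) (hD t))
  zero_mem' := ⟨0, fun t => by simp [linFlowC]⟩
  smul_mem' := by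
    rintro c x ⟨C, hC⟩
    refine ⟨‖c‖ * C, fun t => ?_⟩
    rw [linFlowC, mulVec_smul, norm_smul]
    exact mul_le_mul_of_nonneg_left (hC t) (norm_nonneg c)

theorem mulVec_mem_boundedOrbits {B : Matrix (Fin n) (Fin n) ℂ} (hAB : Commute A B)
    {x : Fin n → ℂ} (hx : x ∈ boundedOrbits A) : B *ᵥ x ∈ boundedOrbits A := by
  open scoped Matrix.Norms.Operator in
  obtain ⟨C, hC⟩ := hx
  refine ⟨‖B‖ * C, fun t => ?_⟩
  have hcomm : linFlowC A t (B *ᵥ x) = B *ᵥ linFlowC A t x := by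
    simp only [linFlowC, mulVec_mulVec, ((hAB.smul_left t).exp_left).eq]
  rw [hcomm]
  exact (linfty_opNorm_mulVec B _).trans (mul_le_mul_of_nonneg_left (hC t) (norm_nonneg B))

theorem re_eq_zero_of_mulVec_eq_smul {μ : ℂ} {v : Fin n → ℂ} (hv : A *ᵥ v = μ • v) (hv0 : v ≠ 0)
    (hB : v ∈ boundedOrbits A) : μ.re = 0 := by
  obtain ⟨C, hC⟩ := hB
  exact Real.eq_zero_of_forall_exp_mul_mul_le (norm_pos_iff.mpr hv0)
    fun t => norm_linFlowC_of_mulVec_eq_smul A hv t ▸ hC t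

theorem sub_smul_one_mulVec_mem_boundedOrbits (μ : ℂ) {x : Fin n → ℂ}
    (hx : x ∈ boundedOrbits A) : (A - μ • 1) *ᵥ x ∈ boundedOrbits A :=
  mulVec_mem_boundedOrbits A ((Commute.refl A).sub_right ((Commute.one_right A).smul_right μ)) hx

theorem sub_smul_one_mulVec_eq_zero_of_sq {μ : ℂ} {x : Fin n → ℂ}
    (hx : (A - μ • 1) *ᵥ (A - μ • 1) *ᵥ x = 0) (hB : x ∈ boundedOrbits A) :
    (A - μ • 1) *ᵥ x = 0 := by
  by_contra hy
  have hre : μ.re = 0 :=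
    re_eq_zero_of_mulVec_eq_smul A ((sub_smul_one_mulVec_eq_zero_iff A μ _).mp hx) hy
      (sub_smul_one_mulVec_mem_boundedOrbits A μ hB)
  obtain ⟨C, hC⟩ := hB
  refine hy (eq_zero_of_forall_norm_add_smul_le (x := x) (C := C) fun t => ?_)
  simpa [norm_linFlowC_of_sub_smul_one_sq A hx, hre, Complex.coe_smul] using hC t

theorem sub_smul_one_mulVec_eq_zero_of_pow {μ : ℂ} (k : ℕ) {x : Fin n → ℂ}
    (hx : ((A - μ • 1) ^ k) *ᵥ x = 0) (hB : x ∈ boundedOrbits A) : (A - μ • 1) *ᵥ x = 0 := by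
  induction k generalizing x with
  | zero => simp_all
  | succ k ih =>
    rw [pow_succ, ← mulVec_mulVec] at hx
    exact sub_smul_one_mulVec_eq_zero_of_sq A
      (ih hx (sub_smul_one_mulVec_mem_boundedOrbits A μ hB)) hB

theorem mem_eigenspace_of_mem_maxGenEigenspace {μ : ℂ} {x : Fin n → ℂ}
    (hx : x ∈ maxGenEigenspace (toLin' A) μ) (hB : x ∈ boundedOrbits A) :
    x ∈ eigenspace (toLin' A) μ := by
  obtain ⟨k, hk⟩ := (mem_maxGenEigenspace _ _ _).mp hx
  rw [mem_eigenspace_iff, toLin'_apply, ← sub_smul_one_mulVec_eq_zero_iff]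
  refine sub_smul_one_mulVec_eq_zero_of_pow A k ?_ hB
  rwa [← toLin'_apply, toLin'_pow, map_sub, map_smul, toLin'_one]

theorem boundedOrbits_le_iSup_eigenspace :
    boundedOrbits A ≤ ⨆ μ ∈ {μ : ℂ | μ.re = 0}, eigenspace (toLin' A) μ := by
  have hinv : ∀ x ∈ boundedOrbits A, toLin' A x ∈ boundedOrbits A := fun x hx =>
    mulVec_mem_boundedOrbits A (Commute.refl A) hx
  calc boundedOrbits A = boundedOrbits A ⊓ ⨆ μ, maxGenEigenspace (toLin' A) μ := by
        rw [iSup_maxGenEigenspace_eq_top, inf_top_eq]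
    _ = ⨆ μ, boundedOrbits A ⊓ maxGenEigenspace (toLin' A) μ :=
        Submodule.inf_iSup_genEigenspace hinv ⊤
    _ ≤ _ := iSup_le fun μ x ⟨hB, hx⟩ => by
        by_cases hx0 : x = 0
        · exact hx0 ▸ zero_mem _
        have hxμ := mem_eigenspace_of_mem_maxGenEigenspace A hx hB
        have hre := re_eq_zero_of_mulVec_eq_smul A
          (by rwa [mem_eigenspace_iff, toLin'_apply] at hxμ) hx0 hB
        exact Submodule.mem_iSup_of_mem μ (Submodule.mem_iSup_of_mem hre hxμ)

theorem iSup_eigenspace_le_boundedOrbits :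
    ⨆ μ ∈ {μ : ℂ | μ.re = 0}, eigenspace (toLin' A) μ ≤ boundedOrbits A :=
  iSup₂_le fun μ hμ x hx => ⟨‖x‖, fun t => by
    rw [norm_linFlowC_of_mulVec_eq_smul A (by rwa [mem_eigenspace_iff, toLin'_apply] at hx),
      show μ.re = 0 from hμ, mul_zero, Real.exp_zero, one_mul]⟩

end BoundedOrbits

/-- **The bounded-orbit set is the sum of the purely imaginary eigenspaces.**
For a complex matrix `A`, the set of points whose orbit under the flow `e^{tA}` is bounded
equals the sum, over eigenvalues `μ` with `Re μ = 0`, of the eigenspaces `ker (A - μ)`.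
In particular it is a linear subspace on which `A` acts diagonalizably with purely
imaginary eigenvalues. -/
theorem boundedOrbit_eq_sup_imaginary_eigenspaces (n : ℕ) (A : Matrix (Fin n) (Fin n) ℂ) :
    {x : Fin n → ℂ | ∃ C : ℝ, ∀ t : ℝ, ‖linFlowC A t x‖ ≤ C}
      = ↑(⨆ μ ∈ {μ : ℂ | μ.re = 0}, Module.End.eigenspace (Matrix.toLin' A) μ) :=
  congrArg SetLike.coe
    (le_antisymm (boundedOrbits_le_iSup_eigenspace A) (iSup_eigenspace_le_boundedOrbits A))
end

section
/- Fix r ≥ 1 and let M be the (r+1)×(r+1) real matrix with entries M_{i,j} = 1/((r − i + j)!) for i, j ∈ {0,…,r} (so row i is (1/(r−i)!, 1/(r−i+1)!, …, 1/(2r−i)!)). Then M is invertible, and the (0, r) entry of M⁻¹ equals (−1)^r. Consequently, if M x = y, then x_0 = (−1)^r y_r + Σ_{i<r} a_i y_i where the constants a_i = (M⁻¹)_{0,i} depend only on r. -/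
/-!
Since `(r + j)! / (r - i + j)!` is the falling factorial `(r + j)(r + j - 1)⋯(r + j - i + 1)`,
`M` is the matrix of the monic polynomials `descPochhammer i` evaluated at the distinct nodes
`r + j`, times the diagonal matrix of the `1 / (r + j)!`. The first factor has the Vandermonde
determinant, so `M` is invertible. The last column of `M⁻¹` is
`u j = (-1)^(r - j) * C(r, j) * (r + j)! / r!`: the `i`-th entry of `M u` is `1 / r!` times the
`r`-th forward difference at `r` of `descPochhammer i`, which is `0` for `i < r` and `r!` for
`i = r`. Its entry `u 0` is `(-1)^r`.
-/

open Finset Matrix Polynomial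
open scoped Nat

section

variable {R : Type*} [CommRing R] [IsDomain R]

theorem det_of_eval_descPochhammer {n : ℕ} (v : Fin n → R) :
    (of fun i j : Fin n => (descPochhammer R i).eval (v j)).det = (vandermonde v).det := by
  rw [det_eval_matrixOfPolynomials_eq_det_vandermonde v (fun i => descPochhammer R i)
    (fun i => descPochhammer_natDegree R i) (fun i => monic_descPochhammer R i), ← det_transpose]
  rfl

theorem sum_alternating_choose_mul_eval_descPochhammer {n i : ℕ} (hi : i ≤ n) (y : R) :
    ∑ j ∈ range (n + 1), (-1) ^ (n - j) * (n.choose j : R) * (descPochhammer R i).eval (y + j) =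
      if i = n then (n ! : R) else 0 := by
  have h := fwdDiff_iter_eq_sum_shift 1 (descPochhammer R i).eval n y
  simp only [nsmul_one, zsmul_eq_mul] at h
  push_cast at h
  rw [← h]
  split_ifs with hin
  · subst hin
    have := (descPochhammer R i).fwdDiff_iter_degree_eq_factorial
    rw [descPochhammer_natDegree, (monic_descPochhammer R i).leadingCoeff, one_smul] at this
    simp [this]
  · rw [Polynomial.fwdDiff_iter_eq_zero_of_degree_lt (by rw [descPochhammer_natDegree]; omega)]
    rfl

end

def factorialMatrix (K : Type*) [DivisionRing K] (r : ℕ) : Matrix (Fin (r + 1)) (Fin (r + 1)) K :=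
  of fun i j => 1 / (r - i + j)!

section

variable {K : Type*} [Field K] [CharZero K]

theorem one_div_factorial_sub_eq {n i : ℕ} (hi : i ≤ n) :
    (1 : K) / (n - i)! = (descPochhammer K i).eval (n : K) / n ! := by
  rw [descPochhammer_eval_eq_descFactorial, ← Nat.factorial_mul_descFactorial hi]
  push_cast
  have : ((n.descFactorial i : ℕ) : K) ≠ 0 := by
    exact_mod_cast (Nat.descFactorial_pos.mpr hi).ne'
  field_simp

theorem factorialMatrix_eq_mul_diagonal (r : ℕ) :
    factorialMatrix K r =
      (of fun i j : Fin (r + 1) => (descPochhammer K i).eval ((r + j : ℕ) : K)) *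
        diagonal fun j : Fin (r + 1) => ((r + j : ℕ)! : K)⁻¹ := by
  ext i j
  rw [mul_diagonal, factorialMatrix, of_apply, of_apply, ← div_eq_mul_inv,
    ← one_div_factorial_sub_eq (by omega), Nat.sub_add_comm (by omega)]

theorem isUnit_factorialMatrix (r : ℕ) : IsUnit (factorialMatrix K r) := by
  rw [isUnit_iff_isUnit_det, isUnit_iff_ne_zero, factorialMatrix_eq_mul_diagonal, det_mul,
    det_of_eval_descPochhammer, det_diagonal]
  refine mul_ne_zero (det_vandermonde_ne_zero_iff.mpr fun j k hjk => ?_) ?_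
  · simpa [Fin.ext_iff] using hjk
  · exact prod_ne_zero_iff.mpr fun j _ =>
      inv_ne_zero (Nat.cast_ne_zero.2 (Nat.factorial_ne_zero _))

theorem factorialMatrix_mulVec (r : ℕ) :
    factorialMatrix K r *ᵥ
        (fun j : Fin (r + 1) => (-1 : K) ^ (r - j) * r.choose j * (r + j : ℕ)! / r !) =
      Pi.single (Fin.last r) 1 := by
  have hr : (r ! : K) ≠ 0 := Nat.cast_ne_zero.2 (Nat.factorial_ne_zero r)
  have hdiag : (diagonal fun j : Fin (r + 1) => ((r + j : ℕ)! : K)⁻¹) *ᵥ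
      (fun j : Fin (r + 1) => (-1 : K) ^ (r - j) * r.choose j * (r + j : ℕ)! / r !) =
      fun j : Fin (r + 1) => (-1 : K) ^ (r - j) * r.choose j / r ! := by
    ext j
    have : ((r + j : ℕ)! : K) ≠ 0 := Nat.cast_ne_zero.2 (Nat.factorial_ne_zero _)
    rw [mulVec_diagonal]
    field_simp
  ext i
  rw [factorialMatrix_eq_mul_diagonal, ← mulVec_mulVec, hdiag]
  simp only [mulVec, dotProduct, of_apply]
  have key := sum_alternating_choose_mul_eval_descPochhammer (R := K) (Nat.lt_succ_iff.mp i.isLt)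
    (r : K)
  rw [← Fin.sum_univ_eq_sum_range (fun j => (-1 : K) ^ (r - j) * r.choose j *
    (descPochhammer K i).eval ((r : K) + j))] at key
  calc ∑ j : Fin (r + 1), (descPochhammer K i).eval ((r + j : ℕ) : K) *
        ((-1) ^ (r - j) * r.choose j / r !)
      = (∑ j : Fin (r + 1), (-1 : K) ^ (r - j) * r.choose j *
          (descPochhammer K i).eval ((r : K) + j)) / r ! := by
        rw [sum_div]; congr! 1 with j; push_cast; ring
    _ = (Pi.single (Fin.last r) 1 : Fin (r + 1) → K) i := by
        rw [key]
        rcases eq_or_ne i (Fin.last r) with rfl | hi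
        · simp [hr]
        · have hir : (i : ℕ) ≠ r := fun h => hi (Fin.ext h)
          simp [hi, hir]

theorem factorialMatrix_inv_zero_last (r : ℕ) :
    (factorialMatrix K r)⁻¹ 0 (Fin.last r) = (-1) ^ r := by
  have := (isUnit_factorialMatrix (K := K) r).invertible
  have h := congrFun (inv_mulVec_eq_vec (factorialMatrix_mulVec (K := K) r).symm) 0
  have hr : (r ! : K) ≠ 0 := Nat.cast_ne_zero.2 (Nat.factorial_ne_zero r)
  simpa [mulVec_single_one, hr] using h

end

theorem Fin.sum_univ_eq_last_add_sum_val_lt {M : Type*} [AddCommMonoid M] {n : ℕ}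
    (f : Fin (n + 1) → M) :
    ∑ i, f i =
      f (Fin.last n) + ∑ i ∈ univ.filter fun i : Fin (n + 1) => (i : ℕ) < n, f i := by
  rw [← add_sum_erase univ f (mem_univ _)]
  congr 2
  ext i
  simp [Fin.ext_iff, Fin.val_last, Nat.lt_iff_le_and_ne, Nat.lt_succ_iff.mp i.isLt]

theorem factorial_matrix_inverse_entry_general (r : ℕ)
    (M : Matrix (Fin (r + 1)) (Fin (r + 1)) ℝ)
    (hM : M = Matrix.of fun (i j : Fin (r + 1)) => (1 : ℝ) / Nat.factorial (r - (i : ℕ) + (j : ℕ))) :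
    IsUnit M
    ∧ M⁻¹ 0 (Fin.last r) = (-1 : ℝ) ^ r
    ∧ ∀ x y : Fin (r + 1) → ℝ, M.mulVec x = y →
        x 0 = (-1 : ℝ) ^ r * y (Fin.last r)
          + ∑ i ∈ Finset.univ.filter fun i : Fin (r + 1) => (i : ℕ) < r,
              M⁻¹ 0 i * y i := by
  obtain rfl : M = factorialMatrix ℝ r := hM
  have := (isUnit_factorialMatrix (K := ℝ) r).invertible
  refine ⟨isUnit_factorialMatrix r, factorialMatrix_inv_zero_last r, fun x y hxy => ?_⟩
  rw [← inv_mulVec_eq_vec hxy.symm, mulVec, dotProduct, Fin.sum_univ_eq_last_add_sum_val_lt,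
    factorialMatrix_inv_zero_last]

/-- **Proposition 6.2: the factorial-coefficient matrix.**
For `r ≥ 1`, the matrix `M` with `M i j = 1/((r − i + j)!)` (indices `0,…,r`) is invertible,
the `(0, r)` entry of `M⁻¹` is `(−1)^r`, and consequently, whenever `M x = y`,
`x₀ = (−1)^r yᵣ + Σ_{i<r} aᵢ yᵢ` where `aᵢ = (M⁻¹)₍₀,ᵢ₎` depend only on `r`. -/
theorem factorial_matrix_inverse_entry (r : ℕ) (hr : 1 ≤ r)
    (M : Matrix (Fin (r + 1)) (Fin (r + 1)) ℝ)
    (hM : M = Matrix.of fun (i j : Fin (r + 1)) => (1 : ℝ) / Nat.factorial (r - (i : ℕ) + (j : ℕ))) :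
    IsUnit M
    ∧ M⁻¹ 0 (Fin.last r) = (-1 : ℝ) ^ r
    ∧ ∀ x y : Fin (r + 1) → ℝ, M.mulVec x = y →
        x 0 = (-1 : ℝ) ^ r * y (Fin.last r)
          + ∑ i ∈ Finset.univ.filter fun i : Fin (r + 1) => (i : ℕ) < r,
              M⁻¹ 0 i * y i :=
  factorial_matrix_inverse_entry_general r M hM
end

section
/- Define g : ℕ_{≥1} × ℕ → ℕ recursively by g(1, m) = ⌊m/2⌋, g(2r, m) = g(r, ⌈m/2⌉) and g(2r+1, m) = g(r, ⌊m/2⌋) for all r ≥ 1. Then for all k ≥ 1 and all m ≥ 0: g(k, m) = 0 if and only if k ≥ m. -/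
/-- **Corollary 6.3(1), arithmetic form.** If `g : ℕ × ℕ → ℕ` satisfies the recursion
`g 1 m = ⌊m/2⌋`, `g (2r) m = g r ⌈m/2⌉`, `g (2r+1) m = g r ⌊m/2⌋` (for `r ≥ 1`), then for
all `k ≥ 1` and all `m`, `g k m = 0` iff `k ≥ m`. -/
theorem iterated_reduction_vanishes_iff (g : ℕ → ℕ → ℕ)
    (h1 : ∀ m : ℕ, g 1 m = m / 2)
    (heven : ∀ r : ℕ, 1 ≤ r → ∀ m : ℕ, g (2 * r) m = g r ((m + 1) / 2))
    (hodd : ∀ r : ℕ, 1 ≤ r → ∀ m : ℕ, g (2 * r + 1) m = g r (m / 2)) :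
    ∀ k : ℕ, 1 ≤ k → ∀ m : ℕ, (g k m = 0 ↔ m ≤ k) := by
  intro k
  induction k using Nat.strong_induction_on with
  | _ k ih =>
    intro hk m
    match k, hk with
    | 1, _ => rw [h1]; omega
    | (n+2), _ =>
      rcases Nat.even_or_odd (n+2) with ⟨r, hr⟩ | ⟨r, hr⟩
      · have hr1 : 1 ≤ r := by omega
        have : n + 2 = 2 * r := by omega
        rw [this, heven r hr1 m, ih r (by omega) hr1 ((m+1)/2)]
        omega
      · have hr1 : 1 ≤ r := by omega
        have : n + 2 = 2 * r + 1 := by omega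
        rw [this, hodd r hr1 m, ih r (by omega) hr1 (m/2)]
        omega
end
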